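/- Double robustness in the outcome direction: if the propensity scores are correctly specified (π1 = π1*, π2 = π2*) but the outcome functions η1, η2 are arbitrary bounded measurable functions, then E[S0 + S1 + S2] = E[ Σ_{a1,a2} d(a1,a2) ( η1*(a1,a2,Z1) − τ(a1,a2;θ) ) ], i.e., the sum of the doubly robust score terms recovers the correct population moment regardless of the misspecification of η1, η2. -/

import Mathlib

open MeasureTheory Filter

/-- Indicator (as a real-valued function) of the event `A = a`. -/
noncomputable def ind {Ω : Type*} (A : Ω → Bool) (a : Bool) : Ω → ℝ :=
  fun ω => if A ω = a then 1 else 0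

open scoped ENNReal

/-!
Fix a treatment arm `(a₁, a₂)`, let `I = 1{A₁ = a₁}`, `J = 1{A₁ = a₁, A₂ = a₂}`,
`𝓕₁ = σ(Z₁) ≤ 𝓕₂ = σ(Z₁, Z₂)` and `πJ = E[I | 𝓕₂]`, so that `πJ π₂ = E[J | 𝓕₂]`.
Pulling the `𝓕₂`-measurable weights out of `E[· | 𝓕₂]` turns the stage-two term
`J (Y - η₂) / (π₁ π₂)` into `(πJ / π₁) (η₂* - η₂)` and the stage-one term `I (η₂ - η₁) / π₁`
into `(πJ / π₁) (η₂ - η₁)`, so the working model `η₂` cancels. Conditioning the sum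
`(πJ / π₁) (η₂* - η₁)` on `𝓕₁` gives `η₁* - η₁` by the tower property, and adding `S₀`
leaves `η₁* - τ`.

The integrability of `I / π₁` and of `I η₂*` comes from the pull-out property of the
`ℝ≥0∞`-valued conditional expectation, which needs no integrability of the measurable factor.
-/

section Indicator
variable {Ω : Type*}

theorem measurable_ind [MeasurableSpace Ω] {A : Ω → Bool} (hA : Measurable A) (b : Bool) :
    Measurable (ind A b) :=
  Measurable.ite (hA (measurableSet_singleton b)) measurable_const measurable_const

theorem ind_nonneg (A : Ω → Bool) (b : Bool) (ω : Ω) : 0 ≤ ind A b ω := by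
  unfold ind; split_ifs <;> norm_num

theorem ind_le_one (A : Ω → Bool) (b : Bool) (ω : Ω) : ind A b ω ≤ 1 := by
  unfold ind; split_ifs <;> norm_num

theorem abs_ind_mul_ind_le_one (A B : Ω → Bool) (a b : Bool) (ω : Ω) :
    |ind A a ω * ind B b ω| ≤ 1 := by
  unfold ind; split_ifs <;> norm_num

theorem integrable_ind [MeasurableSpace Ω] {μ : Measure Ω} [IsFiniteMeasure μ] {A : Ω → Bool}
    (hA : Measurable A) (b : Bool) : Integrable (ind A b) μ :=
  .of_bound (measurable_ind hA b).aestronglyMeasurable 1 (ae_of_all _ fun ω => by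
    rw [Real.norm_of_nonneg (ind_nonneg A b ω)]; exact ind_le_one A b ω)

end Indicator

section
variable {Ω : Type*} {m m0 : MeasurableSpace Ω} {μ : Measure Ω}

theorem lintegral_mul_condLExp (hm : m ≤ m0) [SigmaFinite (μ.trim hm)] {g h : Ω → ℝ≥0∞}
    (hg : AEMeasurable g μ) (hh : Measurable[m] h) :
    ∫⁻ ω, h ω * g ω ∂μ = ∫⁻ ω, h ω * μ⁻[g|m] ω ∂μ := by
  have htrim : (μ.withDensity g).trim hm = (μ.trim hm).withDensity μ⁻[g|m] := by
    refine @Measure.ext _ m _ _ fun s hs => ?_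
    rw [trim_measurableSet_eq hm hs, withDensity_apply _ (hm s hs), withDensity_apply _ hs,
      setLIntegral_condLExp_trim hm μ g hs]
  calc ∫⁻ ω, h ω * g ω ∂μ = ∫⁻ ω, h ω ∂μ.withDensity g := by
        rw [lintegral_withDensity_eq_lintegral_mul₀' hg ((hh.mono hm le_rfl).aemeasurable)]
        simp only [Pi.mul_apply, mul_comm]
    _ = ∫⁻ ω, h ω ∂(μ.trim hm).withDensity μ⁻[g|m] := by rw [← htrim, lintegral_trim hm hh]
    _ = ∫⁻ ω, h ω * μ⁻[g|m] ω ∂μ := by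
        rw [lintegral_withDensity_eq_lintegral_mul _ (measurable_condLExp m μ g) hh,
          lintegral_trim hm ((measurable_condLExp m μ g).mul hh)]
        simp only [Pi.mul_apply, mul_comm]

theorem integrable_mul_of_integrable_mul_condExp (hm : m ≤ m0) [SigmaFinite (μ.trim hm)]
    {g h : Ω → ℝ} (hg : Integrable g μ) (hg0 : 0 ≤ᵐ[μ] g) (hh : AEStronglyMeasurable[m] h μ)
    (hhg : Integrable (h * μ[g|m]) μ) : Integrable (h * g) μ := by
  obtain ⟨h', hh', hhh'⟩ := hh
  have hh'g : Integrable (h' * μ[g|m]) μ := hhg.congr (hhh'.mul (ae_eq_refl _))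
  refine Integrable.congr ?_ (hhh'.symm.mul (ae_eq_refl g))
  refine ⟨(StronglyMeasurable.mono hh' hm).aestronglyMeasurable.mul hg.1, ?_⟩
  have hh'e : Measurable[m] fun ω => ‖h' ω‖ₑ := measurable_enorm.comp hh'.measurable
  calc ∫⁻ ω, ‖(h' * g) ω‖ₑ ∂μ = ∫⁻ ω, ‖h' ω‖ₑ * ENNReal.ofReal (g ω) ∂μ := by
        refine lintegral_congr_ae (hg0.mono fun ω hω => ?_)
        simp only [Pi.mul_apply, enorm_mul, Real.enorm_of_nonneg hω]
    _ = ∫⁻ ω, ‖h' ω‖ₑ * ENNReal.ofReal ((μ[g|m]) ω) ∂μ := by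
        rw [lintegral_mul_condLExp hm hg.1.aemeasurable.ennreal_ofReal hh'e]
        refine lintegral_congr_ae ((condLExp_ofReal m hg hg0).mono fun ω hω => ?_)
        simp only [hω]
    _ = ∫⁻ ω, ‖(h' * μ[g|m]) ω‖ₑ ∂μ := by
        refine lintegral_congr_ae ((condExp_nonneg (m := m) hg0).mono fun ω hω => ?_)
        simp only [Pi.mul_apply, enorm_mul, Real.enorm_of_nonneg hω]
    _ < ⊤ := hh'g.2

theorem integral_mul_eq_of_condExp_ae_eq (hm : m ≤ m0) [SigmaFinite (μ.trim hm)]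
    {f g h : Ω → ℝ} (hf : AEStronglyMeasurable[m] f μ) (hg : Integrable g μ)
    (hfg : Integrable (f * g) μ) (hgh : μ[g|m] =ᵐ[μ] h) : ∫ ω, (f * g) ω ∂μ = ∫ ω, (f * h) ω ∂μ := by
  rw [← integral_condExp hm]
  exact integral_congr_ae ((condExp_mul_of_aestronglyMeasurable_left hf hfg hg).trans
    (hgh.mono fun ω hω => by simp only [Pi.mul_apply, hω]))

theorem integrable_mul_of_condExp_ae_eq {f g h : Ω → ℝ}
    (hf : AEStronglyMeasurable[m] f μ) (hg : Integrable g μ) (hfg : Integrable (f * g) μ)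
    (hgh : μ[g|m] =ᵐ[μ] h) : Integrable (f * h) μ :=
  integrable_condExp.congr ((condExp_mul_of_aestronglyMeasurable_left hf hfg hg).trans
    (hgh.mono fun ω hω => by simp only [Pi.mul_apply, hω]))

theorem aestronglyMeasurable_of_mul {q π : Ω → ℝ} (hq : AEStronglyMeasurable[m] q μ)
    (hq0 : ∀ᵐ ω ∂μ, q ω ≠ 0) (hqπ : AEStronglyMeasurable[m] (q * π) μ) :
    AEStronglyMeasurable[m] π μ := by
  refine (hqπ.div₀ hq).congr ?_
  filter_upwards [hq0] with ω h0
  simp only [Pi.div_apply, Pi.mul_apply]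
  field_simp

theorem integrable_inv_mul_of_ae_eq_condExp (hm : m ≤ m0) [IsFiniteMeasure μ]
    {I p : Ω → ℝ} (hI : Integrable I μ) (hI0 : 0 ≤ᵐ[μ] I) (hp : p =ᵐ[μ] μ[I|m])
    (hp0 : ∀ᵐ ω ∂μ, p ω ≠ 0) : Integrable (p⁻¹ * I) μ := by
  refine integrable_mul_of_integrable_mul_condExp hm hI hI0
    (AEStronglyMeasurable.inv₀ ⟨_, stronglyMeasurable_condExp, hp⟩)
    ((integrable_const (1 : ℝ)).congr ?_)
  filter_upwards [hp, hp0] with ω h h0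
  simp only [Pi.mul_apply, Pi.inv_apply, ← h]
  field_simp

theorem condExp_mul_sub_of_ae_eq (hm : m ≤ m0) [IsFiniteMeasure μ] {J Y f r η : Ω → ℝ} {C : ℝ}
    (hJ : Measurable J) (hJ1 : ∀ ω, |J ω| ≤ 1) (hY : Integrable Y μ)
    (hf : StronglyMeasurable[m] f) (hfC : ∀ ω, |f ω| ≤ C)
    (hr : r =ᵐ[μ] μ[J|m]) (hη : r * η =ᵐ[μ] μ[J * Y|m]) :
    μ[J * (Y - f)|m] =ᵐ[μ] r * (η - f) := by
  have hJi : Integrable J μ := .of_bound hJ.aestronglyMeasurable 1 (ae_of_all _ hJ1)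
  have hJY : Integrable (J * Y) μ := hY.bdd_mul hJ.aestronglyMeasurable (ae_of_all _ hJ1)
  have hfJ : Integrable (f * J) μ :=
    hJi.bdd_mul (hf.mono hm).aestronglyMeasurable (ae_of_all _ hfC)
  have hpull : μ[f * J|m] =ᵐ[μ] f * r :=
    (condExp_mul_of_stronglyMeasurable_left hf hfJ hJi).trans
      (hr.symm.mono fun ω hω => by simp only [Pi.mul_apply, hω])
  rw [show J * (Y - f) = J * Y - f * J by ring]
  filter_upwards [condExp_sub hJY hfJ m, hη, hpull] with ω h1 h2 h3
  simp only [Pi.sub_apply, Pi.mul_apply] at h1 h2 h3 ⊢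
  rw [h1, ← h2, h3]
  ring

end

section
variable {Ω : Type*} {m₁ m₂ m0 : MeasurableSpace Ω} {μ : Measure Ω}

theorem condExp_condExp_mul_of_stronglyMeasurable (hm₁₂ : m₁ ≤ m₂) (hm₂ : m₂ ≤ m0)
    [SigmaFinite (μ.trim hm₂)] {g η : Ω → ℝ} (hη : StronglyMeasurable[m₂] η)
    (hg : Integrable g μ) (hgη : Integrable (g * η) μ) :
    μ[μ[g|m₂] * η|m₁] =ᵐ[μ] μ[g * η|m₁] :=
  (condExp_congr_ae (condExp_mul_of_stronglyMeasurable_right hη hgη hg).symm).trans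
    (condExp_condExp_of_le hm₁₂ hm₂)

theorem integral_div_mul_sub_eq_of_condExp (hm₁₂ : m₁ ≤ m₂) (hm₂ : m₂ ≤ m0)
    [IsFiniteMeasure μ] {I p q η₁ η₂ f₁ : Ω → ℝ} {C : ℝ}
    (hI : Integrable I μ) (hI0 : ∀ ω, 0 ≤ I ω) (hI1 : ∀ ω, I ω ≤ 1)
    (hp : p =ᵐ[μ] μ[I|m₁]) (hp0 : ∀ᵐ ω ∂μ, 0 < p ω) (hq : q =ᵐ[μ] μ[I|m₂])
    (hη₂ : StronglyMeasurable[m₂] η₂) (hη₁ : p * η₁ =ᵐ[μ] μ[I * η₂|m₁])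
    (hη₁i : Integrable η₁ μ) (hf₁ : StronglyMeasurable[m₁] f₁) (hf₁C : ∀ ω, |f₁ ω| ≤ C)
    (hK : Integrable (fun ω => q ω / p ω * (η₂ ω - f₁ ω)) μ) :
    ∫ ω, q ω / p ω * (η₂ ω - f₁ ω) ∂μ = ∫ ω, η₁ ω ∂μ - ∫ ω, f₁ ω ∂μ := by
  have hm₁ := hm₁₂.trans hm₂
  have hpm : AEStronglyMeasurable[m₁] p μ := ⟨_, stronglyMeasurable_condExp, hp⟩
  have hqm : AEStronglyMeasurable[m₂] q μ := ⟨_, stronglyMeasurable_condExp, hq⟩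
  have hf₁i : Integrable f₁ μ :=
    .of_bound (hf₁.mono hm₁).aestronglyMeasurable C (ae_of_all _ hf₁C)
  have hr : StronglyMeasurable[m₂] (η₂ - f₁) := hη₂.sub (hf₁.mono hm₁₂)
  have hp1 : ∀ᵐ ω ∂μ, p ω ≤ 1 := by
    filter_upwards [hp, condExp_mono (m := m₁) hI (integrable_const 1) (ae_of_all _ hI1)]
      with ω h1 h2
    rwa [condExp_const hm₁, ← h1] at h2
  -- `p ≤ 1`, so dropping the weight `1 / p` preserves integrability.
  have hqr : Integrable (q * (η₂ - f₁)) μ := by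
    refine hK.mono ((hqm.mul hr.aestronglyMeasurable).mono hm₂) ?_
    filter_upwards [hp0, hp1] with ω h0 h1
    calc ‖(q * (η₂ - f₁)) ω‖ ≤ ‖(q * (η₂ - f₁)) ω‖ / p ω := le_div_self (norm_nonneg _) h0 h1
      _ = ‖q ω / p ω * (η₂ ω - f₁ ω)‖ := by
        rw [div_mul_eq_mul_div, norm_div, Real.norm_of_nonneg h0.le]; rfl
  have hIr : Integrable (I * (η₂ - f₁)) μ := by
    rw [mul_comm]
    refine integrable_mul_of_integrable_mul_condExp hm₂ hI (ae_of_all _ hI0)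
      hr.aestronglyMeasurable (hqr.congr ?_)
    filter_upwards [hq] with ω h
    simp only [Pi.mul_apply, h, mul_comm]
  have hIf : Integrable (I * f₁) μ :=
    hI.mul_bdd (hf₁.mono hm₁).aestronglyMeasurable (ae_of_all _ hf₁C)
  have hIη : Integrable (I * η₂) μ := by
    rw [show I * η₂ = I * (η₂ - f₁) + I * f₁ by ring]
    exact hIr.add hIf
  have hcond : μ[q * (η₂ - f₁)|m₁] =ᵐ[μ] p * (η₁ - f₁) :=
    calc μ[q * (η₂ - f₁)|m₁] =ᵐ[μ] μ[μ[I|m₂] * (η₂ - f₁)|m₁] :=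
          condExp_congr_ae (hq.mul (ae_eq_refl _))
      _ =ᵐ[μ] μ[I * (η₂ - f₁)|m₁] :=
          condExp_condExp_mul_of_stronglyMeasurable hm₁₂ hm₂ hr hI hIr
      _ = μ[I * η₂ - I * f₁|m₁] := by rw [mul_sub]
      _ =ᵐ[μ] μ[I * η₂|m₁] - μ[I * f₁|m₁] := condExp_sub hIη hIf m₁
      _ =ᵐ[μ] p * η₁ - p * f₁ := hη₁.symm.sub
          ((condExp_mul_of_stronglyMeasurable_right hf₁ hIf hI).trans
            (hp.symm.mul (ae_eq_refl _)))
      _ = p * (η₁ - f₁) := by ring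
  calc ∫ ω, q ω / p ω * (η₂ ω - f₁ ω) ∂μ = ∫ ω, (p⁻¹ * (q * (η₂ - f₁))) ω ∂μ := by
        congr 1; ext ω; simp only [Pi.mul_apply, Pi.sub_apply, Pi.inv_apply]; ring
    _ = ∫ ω, (p⁻¹ * (p * (η₁ - f₁))) ω ∂μ :=
        integral_mul_eq_of_condExp_ae_eq hm₁ hpm.inv₀ hqr
          (hK.congr (ae_of_all _ fun ω => by
            simp only [Pi.mul_apply, Pi.sub_apply, Pi.inv_apply]; ring)) hcond
    _ = ∫ ω, η₁ ω - f₁ ω ∂μ := integral_congr_ae (hp0.mono fun ω h => by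
        simp only [Pi.mul_apply, Pi.sub_apply, Pi.inv_apply]; field_simp)
    _ = ∫ ω, η₁ ω ∂μ - ∫ ω, f₁ ω ∂μ := integral_sub hη₁i hf₁i

theorem integral_dr_arm_eq (hm₁₂ : m₁ ≤ m₂) (hm₂ : m₂ ≤ m0) [IsProbabilityMeasure μ]
    {I J Y p q π η₁ η₂ f₁ f₂ : Ω → ℝ} {C : ℝ} (c t : ℝ)
    (hI : Integrable I μ) (hI0 : ∀ ω, 0 ≤ I ω) (hI1 : ∀ ω, I ω ≤ 1)
    (hJ : Measurable J) (hJ1 : ∀ ω, |J ω| ≤ 1) (hY : Integrable Y μ)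
    (hp : p =ᵐ[μ] μ[I|m₁]) (hp0 : ∀ᵐ ω ∂μ, 0 < p ω)
    (hq : q =ᵐ[μ] μ[I|m₂]) (hq0 : ∀ᵐ ω ∂μ, 0 < q ω)
    (hπ : q * π =ᵐ[μ] μ[J|m₂]) (hπ0 : ∀ᵐ ω ∂μ, 0 < π ω)
    (hη₂ : StronglyMeasurable[m₂] η₂) (hη₂Y : q * π * η₂ =ᵐ[μ] μ[J * Y|m₂])
    (hη₁ : p * η₁ =ᵐ[μ] μ[I * η₂|m₁]) (hη₁i : Integrable η₁ μ)
    (hf₁ : StronglyMeasurable[m₁] f₁) (hf₁C : ∀ ω, |f₁ ω| ≤ C)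
    (hf₂ : StronglyMeasurable[m₂] f₂) (hf₂C : ∀ ω, |f₂ ω| ≤ C)
    (hS₂ : Integrable (fun ω => c * (J ω / (p ω * π ω) * (Y ω - f₂ ω))) μ) :
    Integrable (fun ω => c * (f₁ ω - t + I ω / p ω * (f₂ ω - f₁ ω)
      + J ω / (p ω * π ω) * (Y ω - f₂ ω))) μ ∧
    ∫ ω, c * (f₁ ω - t + I ω / p ω * (f₂ ω - f₁ ω) + J ω / (p ω * π ω) * (Y ω - f₂ ω)) ∂μ =
      c * (∫ ω, η₁ ω ∂μ - t) := by
  rcases eq_or_ne c 0 with rfl | hc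
  · simp
  have hm₁ := hm₁₂.trans hm₂
  have hf₁i : Integrable f₁ μ := .of_bound (hf₁.mono hm₁).aestronglyMeasurable C (ae_of_all _ hf₁C)
  have hpm : AEStronglyMeasurable[m₂] p μ := ⟨_, stronglyMeasurable_condExp.mono hm₁₂, hp⟩
  have hπm : AEStronglyMeasurable[m₂] π μ := aestronglyMeasurable_of_mul
    ⟨_, stronglyMeasurable_condExp, hq⟩ (hq0.mono fun _ h => h.ne')
    ⟨_, stronglyMeasurable_condExp, hπ⟩
  set w₁ : Ω → ℝ := fun ω => (p ω)⁻¹ * (f₂ ω - f₁ ω)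
  set w₂ : Ω → ℝ := fun ω => (p ω * π ω)⁻¹
  have hw₁ : AEStronglyMeasurable[m₂] w₁ μ :=
    hpm.inv₀.mul (hf₂.sub (hf₁.mono hm₁₂)).aestronglyMeasurable
  have hw₂ : AEStronglyMeasurable[m₂] w₂ μ := (hpm.mul hπm).inv₀
  have hS₁ : Integrable (w₁ * I) μ := by
    refine ((integrable_inv_mul_of_ae_eq_condExp hm₁ hI (ae_of_all _ hI0) hp
      (hp0.mono fun _ h => h.ne')).bdd_mul (c := C + C)
      ((hf₂.sub (hf₁.mono hm₁₂)).aestronglyMeasurable.mono hm₂) ?_).congr ?_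
    · exact ae_of_all _ fun ω => (abs_sub _ _).trans (add_le_add (hf₂C ω) (hf₁C ω))
    · exact ae_of_all _ fun ω => by simp only [w₁, Pi.mul_apply, Pi.inv_apply, Pi.sub_apply]; ring
  have hS₂' : Integrable (w₂ * (J * (Y - f₂))) μ :=
    (hS₂.const_mul c⁻¹).congr (ae_of_all _ fun ω => by
      simp only [w₂, Pi.mul_apply, Pi.sub_apply, inv_mul_cancel_left₀ hc]; ring)
  have hJYf : Integrable (J * (Y - f₂)) μ :=
    (hY.sub (.of_bound (hf₂.mono hm₂).aestronglyMeasurable C (ae_of_all _ hf₂C))).bdd_mul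
      hJ.aestronglyMeasurable (ae_of_all _ hJ1)
  have hres := condExp_mul_sub_of_ae_eq hm₂ hJ hJ1 hY hf₂ hf₂C hπ hη₂Y
  have hK₁ := integrable_mul_of_condExp_ae_eq hw₁ hI hS₁ hq.symm
  have hK₂ := integrable_mul_of_condExp_ae_eq hw₂ hJYf hS₂' hres
  have hsum : (fun ω => (w₁ * q) ω + (w₂ * (q * π * (η₂ - f₂))) ω) =ᵐ[μ]
      fun ω => q ω / p ω * (η₂ ω - f₁ ω) := by
    filter_upwards [hπ0] with ω h
    simp only [w₁, w₂, Pi.mul_apply, Pi.sub_apply]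
    field_simp
    ring
  have hS₀ : Integrable (fun ω => c * (f₁ ω - t)) μ := (hf₁i.sub (integrable_const t)).const_mul c
  have hS₁₂ : Integrable (fun ω => c * ((w₁ * I) ω + (w₂ * (J * (Y - f₂))) ω)) μ :=
    (hS₁.add hS₂').const_mul c
  have hsplit : (fun ω => c * (f₁ ω - t + I ω / p ω * (f₂ ω - f₁ ω)
      + J ω / (p ω * π ω) * (Y ω - f₂ ω))) =
      fun ω => c * (f₁ ω - t) + c * ((w₁ * I) ω + (w₂ * (J * (Y - f₂))) ω) := by
    ext ω; simp only [w₁, w₂, Pi.mul_apply, Pi.sub_apply]; ring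
  rw [hsplit]
  refine ⟨hS₀.add hS₁₂, ?_⟩
  calc ∫ ω, (c * (f₁ ω - t) + c * ((w₁ * I) ω + (w₂ * (J * (Y - f₂))) ω)) ∂μ
      = c * (∫ ω, f₁ ω ∂μ - t) + c * (∫ ω, (w₁ * I) ω ∂μ + ∫ ω, (w₂ * (J * (Y - f₂))) ω ∂μ) := by
        rw [integral_add hS₀ hS₁₂, integral_const_mul, integral_const_mul,
          integral_sub hf₁i (integrable_const t), integral_add hS₁ hS₂']
        simp
    _ = c * (∫ ω, f₁ ω ∂μ - t) + c * ∫ ω, q ω / p ω * (η₂ ω - f₁ ω) ∂μ := by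
        rw [integral_mul_eq_of_condExp_ae_eq hm₂ hw₁ hI hS₁ hq.symm,
          integral_mul_eq_of_condExp_ae_eq hm₂ hw₂ hJYf hS₂' hres, ← integral_add hK₁ hK₂,
          integral_congr_ae hsum]
    _ = c * (∫ ω, η₁ ω ∂μ - t) := by
        rw [integral_div_mul_sub_eq_of_condExp hm₁₂ hm₂ hI hI0 hI1 hp hp0 hq hη₂ hη₁ hη₁i hf₁ hf₁C
          ((hK₁.add hK₂).congr hsum)]
        ring

end

theorem dr_robust_outcome_direction_general
    {Ω 𝒵₁ 𝒵₂ : Type*} [MeasurableSpace Ω]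
    [MeasurableSpace 𝒵₁] [MeasurableSpace 𝒵₂]
    (μ : Measure Ω) [IsProbabilityMeasure μ]
    (Z1 : Ω → 𝒵₁) (Z2 : Ω → 𝒵₂) (A1 A2 : Ω → Bool) (Y : Ω → ℝ)
    (hZ1 : Measurable Z1) (hZ2 : Measurable Z2)
    (hA1 : Measurable A1) (hA2 : Measurable A2)
    (hYint : Integrable Y μ)
    (d : Bool → Bool → ℝ)
    -- true propensity scores: π1s b1 = P(A1=b1|Z1), π2s b1 b2 = P(A2=b2|A1=b1,Z1,Z2),
    -- πJ b1 = P(A1=b1|Z1,Z2)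
    (π1s πJ : Bool → Ω → ℝ) (π2s : Bool → Bool → Ω → ℝ)
    (hπ1s : ∀ b1, π1s b1 =ᵐ[μ] μ[ind A1 b1 | MeasurableSpace.comap Z1 inferInstance])
    (hπJ : ∀ b1, πJ b1 =ᵐ[μ]
      μ[ind A1 b1 | MeasurableSpace.comap (fun ω => (Z1 ω, Z2 ω)) inferInstance])
    (hπ2s : ∀ b1 b2, (fun ω => πJ b1 ω * π2s b1 b2 ω) =ᵐ[μ]
      μ[fun ω => ind A1 b1 ω * ind A2 b2 ω |
        MeasurableSpace.comap (fun ω => (Z1 ω, Z2 ω)) inferInstance])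
    (hpos1 : ∀ b1, ∀ᵐ ω ∂μ, 0 < π1s b1 ω)
    (hpos2 : ∀ b1 b2, ∀ᵐ ω ∂μ, 0 < π2s b1 b2 ω)
    (hposJ : ∀ b1, ∀ᵐ ω ∂μ, 0 < πJ b1 ω)
    -- true outcome regression η2s b1 b2 = E[Y | A1=b1, A2=b2, Z1, Z2]:
    (η2s : Bool → Bool → Ω → ℝ)
    (hη2meas : ∀ b1 b2,
      Measurable[MeasurableSpace.comap (fun ω => (Z1 ω, Z2 ω)) inferInstance] (η2s b1 b2))
    (hη2 : ∀ b1 b2, (fun ω => πJ b1 ω * π2s b1 b2 ω * η2s b1 b2 ω) =ᵐ[μ]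
      μ[fun ω => ind A1 b1 ω * ind A2 b2 ω * Y ω |
        MeasurableSpace.comap (fun ω => (Z1 ω, Z2 ω)) inferInstance])
    -- true iterated mean η1s b1 b2 = E[η2s b1 b2 | A1=b1, Z1]:
    (η1s : Bool → Bool → Ω → ℝ)
    (hη1 : ∀ b1 b2, (fun ω => π1s b1 ω * η1s b1 b2 ω) =ᵐ[μ]
      μ[fun ω => ind A1 b1 ω * η2s b1 b2 ω | MeasurableSpace.comap Z1 inferInstance])
    (hη1int : ∀ b1 b2, Integrable (η1s b1 b2) μ)
    (τ : Bool → Bool → ℝ)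
    -- arbitrary working outcome models, bounded measurable:
    (η1a η2a : Bool → Bool → Ω → ℝ) (C : ℝ)
    (hη1ameas : ∀ b1 b2, Measurable[MeasurableSpace.comap Z1 inferInstance] (η1a b1 b2))
    (hη2ameas : ∀ b1 b2,
      Measurable[MeasurableSpace.comap (fun ω => (Z1 ω, Z2 ω)) inferInstance] (η2a b1 b2))
    (hη1abd : ∀ b1 b2 ω, |η1a b1 b2 ω| ≤ C)
    (hη2abd : ∀ b1 b2 ω, |η2a b1 b2 ω| ≤ C)
    (hS2aint : Integrable (fun ω => d (A1 ω) (A2 ω) / (π1s (A1 ω) ω * π2s (A1 ω) (A2 ω) ω) * (Y ω - η2a (A1 ω) (A2 ω) ω)) μ) :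
    ∫ ω, ((∑ b1 : Bool, ∑ b2 : Bool, d b1 b2 * (η1a b1 b2 ω - τ b1 b2)) + (∑ b2 : Bool, d (A1 ω) b2 / π1s (A1 ω) ω * (η2a (A1 ω) b2 ω - η1a (A1 ω) b2 ω)) + (d (A1 ω) (A2 ω) / (π1s (A1 ω) ω * π2s (A1 ω) (A2 ω) ω) * (Y ω - η2a (A1 ω) (A2 ω) ω))) ∂μ
      = ∑ b1 : Bool, ∑ b2 : Bool, d b1 b2 * ((∫ ω, η1s b1 b2 ω ∂μ) - τ b1 b2) := by
  have hm₂ : MeasurableSpace.comap (fun ω => (Z1 ω, Z2 ω)) inferInstance ≤ ‹MeasurableSpace Ω› :=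
    (hZ1.prodMk hZ2).comap_le
  have hm₁₂ : MeasurableSpace.comap Z1 inferInstance ≤
      MeasurableSpace.comap (fun ω => (Z1 ω, Z2 ω)) inferInstance :=
    Measurable.comap_le (f := Z1) (measurable_fst.comp (comap_measurable _))
  have hJ b1 b2 : Measurable fun ω => ind A1 b1 ω * ind A2 b2 ω :=
    (measurable_ind hA1 b1).mul (measurable_ind hA2 b2)
  have hS₂ b1 b2 : Integrable (fun ω => d b1 b2 * (ind A1 b1 ω * ind A2 b2 ω
      / (π1s b1 ω * π2s b1 b2 ω) * (Y ω - η2a b1 b2 ω))) μ := by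
    refine (hS2aint.bdd_mul (hJ b1 b2).aestronglyMeasurable
      (ae_of_all _ (abs_ind_mul_ind_le_one A1 A2 b1 b2))).congr (ae_of_all _ fun ω => ?_)
    dsimp only [ind]; split_ifs <;> subst_vars <;> ring
  have harm b1 b2 := integral_dr_arm_eq hm₁₂ hm₂ (d b1 b2) (τ b1 b2) (integrable_ind hA1 b1)
    (ind_nonneg A1 b1) (ind_le_one A1 b1) (hJ b1 b2) (abs_ind_mul_ind_le_one A1 A2 b1 b2) hYint
    (hπ1s b1) (hpos1 b1) (hπJ b1) (hposJ b1) (hπ2s b1 b2) (hpos2 b1 b2)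
    (hη2meas b1 b2).stronglyMeasurable (hη2 b1 b2) (hη1 b1 b2) (hη1int b1 b2)
    (hη1ameas b1 b2).stronglyMeasurable (hη1abd b1 b2) (hη2ameas b1 b2).stronglyMeasurable
    (hη2abd b1 b2) (hS₂ b1 b2)
  calc _ = ∫ ω, ∑ b1 : Bool, ∑ b2 : Bool, d b1 b2 * (η1a b1 b2 ω - τ b1 b2
        + ind A1 b1 ω / π1s b1 ω * (η2a b1 b2 ω - η1a b1 b2 ω)
        + ind A1 b1 ω * ind A2 b2 ω / (π1s b1 ω * π2s b1 b2 ω) * (Y ω - η2a b1 b2 ω)) ∂μ := by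
        refine integral_congr_ae (ae_of_all _ fun ω => ?_)
        cases h1 : A1 ω <;> cases h2 : A2 ω <;>
          simp only [Fintype.sum_bool, ind, h1, h2, Bool.true_eq_false, Bool.false_eq_true,
            ↓reduceIte] <;> ring
    _ = _ := by
      rw [integral_finsetSum _ fun b1 _ => integrable_finsetSum _ fun b2 _ => (harm b1 b2).1]
      refine Finset.sum_congr rfl fun b1 _ => ?_
      rw [integral_finsetSum _ fun b2 _ => (harm b1 b2).1]
      exact Finset.sum_congr rfl fun b2 _ => (harm b1 b2).2

/-- Double robustness in the outcome direction: with correctly specified propensity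
scores `π1*, π2*` but arbitrary bounded measurable outcome functions `η1, η2`,
`E[S0 + S1 + S2] = E[ Σ_(a1,a2) d(a1,a2) (η1*(a1,a2,Z1) − τ(a1,a2;θ)) ]`. -/
theorem dr_robust_outcome_direction
    {Ω 𝒵₁ 𝒵₂ : Type*} [MeasurableSpace Ω]
    [MeasurableSpace 𝒵₁] [MeasurableSpace 𝒵₂]
    (μ : Measure Ω) [IsProbabilityMeasure μ]
    (Z1 : Ω → 𝒵₁) (Z2 : Ω → 𝒵₂) (A1 A2 : Ω → Bool) (Y : Ω → ℝ)
    (hZ1 : Measurable Z1) (hZ2 : Measurable Z2)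
    (hA1 : Measurable A1) (hA2 : Measurable A2)
    (hYint : Integrable Y μ)
    (d : Bool → Bool → ℝ)
    -- true propensity scores: π1s b1 = P(A1=b1|Z1), π2s b1 b2 = P(A2=b2|A1=b1,Z1,Z2),
    -- πJ b1 = P(A1=b1|Z1,Z2)
    (π1s πJ : Bool → Ω → ℝ) (π2s : Bool → Bool → Ω → ℝ)
    (hπ1s : ∀ b1, π1s b1 =ᵐ[μ] μ[ind A1 b1 | MeasurableSpace.comap Z1 inferInstance])
    (hπJ : ∀ b1, πJ b1 =ᵐ[μ]
      μ[ind A1 b1 | MeasurableSpace.comap (fun ω => (Z1 ω, Z2 ω)) inferInstance])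
    (hπ2s : ∀ b1 b2, (fun ω => πJ b1 ω * π2s b1 b2 ω) =ᵐ[μ]
      μ[fun ω => ind A1 b1 ω * ind A2 b2 ω |
        MeasurableSpace.comap (fun ω => (Z1 ω, Z2 ω)) inferInstance])
    (hpos1 : ∀ b1, ∀ᵐ ω ∂μ, 0 < π1s b1 ω)
    (hpos2 : ∀ b1 b2, ∀ᵐ ω ∂μ, 0 < π2s b1 b2 ω)
    (hposJ : ∀ b1, ∀ᵐ ω ∂μ, 0 < πJ b1 ω)
    -- true outcome regression η2s b1 b2 = E[Y | A1=b1, A2=b2, Z1, Z2]: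
    (η2s : Bool → Bool → Ω → ℝ)
    (hη2meas : ∀ b1 b2,
      Measurable[MeasurableSpace.comap (fun ω => (Z1 ω, Z2 ω)) inferInstance] (η2s b1 b2))
    (hη2 : ∀ b1 b2, (fun ω => πJ b1 ω * π2s b1 b2 ω * η2s b1 b2 ω) =ᵐ[μ]
      μ[fun ω => ind A1 b1 ω * ind A2 b2 ω * Y ω |
        MeasurableSpace.comap (fun ω => (Z1 ω, Z2 ω)) inferInstance])
    -- true iterated mean η1s b1 b2 = E[η2s b1 b2 | A1=b1, Z1]:
    (η1s : Bool → Bool → Ω → ℝ)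
    (hη1meas : ∀ b1 b2, Measurable[MeasurableSpace.comap Z1 inferInstance] (η1s b1 b2))
    (hη1 : ∀ b1 b2, (fun ω => π1s b1 ω * η1s b1 b2 ω) =ᵐ[μ]
      μ[fun ω => ind A1 b1 ω * η2s b1 b2 ω | MeasurableSpace.comap Z1 inferInstance])
    (hη1int : ∀ b1 b2, Integrable (η1s b1 b2) μ)
    (τ : Bool → Bool → ℝ)
    -- arbitrary working outcome models, bounded measurable:
    (η1a η2a : Bool → Bool → Ω → ℝ) (C : ℝ)
    (hη1ameas : ∀ b1 b2, Measurable[MeasurableSpace.comap Z1 inferInstance] (η1a b1 b2))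
    (hη2ameas : ∀ b1 b2,
      Measurable[MeasurableSpace.comap (fun ω => (Z1 ω, Z2 ω)) inferInstance] (η2a b1 b2))
    (hη1abd : ∀ b1 b2 ω, |η1a b1 b2 ω| ≤ C)
    (hη2abd : ∀ b1 b2 ω, |η2a b1 b2 ω| ≤ C)
    (hS2aint : Integrable (fun ω => d (A1 ω) (A2 ω) / (π1s (A1 ω) ω * π2s (A1 ω) (A2 ω) ω) * (Y ω - η2a (A1 ω) (A2 ω) ω)) μ)
    (hS1aint : Integrable (fun ω => ∑ b2 : Bool, d (A1 ω) b2 / π1s (A1 ω) ω * (η2a (A1 ω) b2 ω - η1a (A1 ω) b2 ω)) μ) :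
    ∫ ω, ((∑ b1 : Bool, ∑ b2 : Bool, d b1 b2 * (η1a b1 b2 ω - τ b1 b2)) + (∑ b2 : Bool, d (A1 ω) b2 / π1s (A1 ω) ω * (η2a (A1 ω) b2 ω - η1a (A1 ω) b2 ω)) + (d (A1 ω) (A2 ω) / (π1s (A1 ω) ω * π2s (A1 ω) (A2 ω) ω) * (Y ω - η2a (A1 ω) (A2 ω) ω))) ∂μ
      = ∑ b1 : Bool, ∑ b2 : Bool, d b1 b2 * ((∫ ω, η1s b1 b2 ω ∂μ) - τ b1 b2) :=
  dr_robust_outcome_direction_general μ Z1 Z2 A1 A2 Y hZ1 hZ2 hA1 hA2 hYint d π1s πJ π2s hπ1s hπJ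
    hπ2s hpos1 hpos2 hposJ η2s hη2meas hη2 η1s hη1 hη1int τ η1a η2a C hη1ameas hη2ameas hη1abd
    hη2abd hS2aint
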